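/- Equivalence of the representations ρ_λ and ρ_{e^ξ λ}: let t > 0, let ξ ∈ C²([0,2π],ℝ) with ξ(0) = 0, and define the operator V_ξ on functions f : C₀ → ℂ by (V_ξ f)(x) = exp( −(1/(4t)) ∫₀^{2π} ξ′(u)² du − (1/(2t))⟨ξ,x⟩ ) · f(x+ξ). Then for every λ : [0,2π] → ℂ with Re λ, Im λ ∈ L², every α ∈ C²([0,2π],ℝ) with α(0) = 0 and every b ∈ L²([0,2π],ℝ), the intertwining identity V_ξ ∘ ρ_λ(α,b) = ρ_{e^ξ λ}(α,b) ∘ V_ξ holds pointwise on all functions f : C₀ → ℂ, where (e^ξ λ)(u) = e^{ξ(u)} λ(u). -/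

import Mathlib

open MeasureTheory Real

/-- Extension of a function on `[0, 2π]` to `ℝ` (by `0` outside). -/
noncomputable def pathExt (x : Set.Icc (0 : ℝ) (2 * π) → ℝ) : ℝ → ℝ :=
  fun u => if h : u ∈ Set.Icc (0 : ℝ) (2 * π) then x ⟨u, h⟩ else 0

/-- The integration-by-parts form `⟨h,x⟩ = h'(2π)x(2π) - ∫₀^{2π} x(u)h''(u) du` of the
Stieltjes integral `∫₀^{2π} h'(u) dx(u)`. -/
noncomputable def wienerPairing (h : ℝ → ℝ) (x : Set.Icc (0 : ℝ) (2 * π) → ℝ) : ℝ :=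
  deriv h (2 * π) * pathExt x (2 * π)
    - ∫ u in (0 : ℝ)..(2 * π), pathExt x u * deriv (deriv h) u

/-- The operator `ρ_λ(α, b)` of the based path group of the `ax+b` group, acting on
functionals of paths `x` on `[0,2π]`. -/
noncomputable def wienerRho (t : ℝ) (lam : ℝ → ℂ) (α b : ℝ → ℝ)
    (f : (Set.Icc (0 : ℝ) (2 * π) → ℝ) → ℂ) (x : Set.Icc (0 : ℝ) (2 * π) → ℝ) : ℂ :=
  Complex.exp (((-(1 / (4 * t)) * ∫ u in (0 : ℝ)..(2 * π), (deriv α u) ^ 2)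
      - (1 / (2 * t)) * wienerPairing α x : ℝ)) *
  Complex.exp (∫ u in (0 : ℝ)..(2 * π), lam u * (b u : ℂ) *
      Complex.exp ((pathExt x u : ℝ) : ℂ)) *
  f (x + fun u => α u.1)

/-- The intertwining operator
`(V_ξ f)(x) = exp(-(1/(4t))∫₀^{2π}ξ'(u)² du - (1/(2t))⟨ξ,x⟩) · f(x+ξ)`. -/
noncomputable def wienerV (t : ℝ) (ξ : ℝ → ℝ)
    (f : (Set.Icc (0 : ℝ) (2 * π) → ℝ) → ℂ) (x : Set.Icc (0 : ℝ) (2 * π) → ℝ) : ℂ :=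
  Complex.exp (((-(1 / (4 * t)) * ∫ u in (0 : ℝ)..(2 * π), (deriv ξ u) ^ 2)
      - (1 / (2 * t)) * wienerPairing ξ x : ℝ)) *
  f (x + fun u => ξ u.1)

/-! Both sides multiply `f (x + α + ξ)` by an exponential of a quadratic expression in the
paths and by the exponential of a `λ`-integral. The `λ`-integrals agree because
`e^{x+ξ} λ = e^x (e^ξ λ)`. For the quadratic parts, `⟨h, ·⟩` is additive on continuous paths and,
on a smooth path `ξ` with `ξ 0 = 0`, integration by parts gives `⟨h, ξ⟩ = ∫₀^{2π} h' ξ'`, which is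
symmetric in `h` and `ξ`; this is exactly the cross term by which the two exponents could differ. -/

section

variable {x y : Set.Icc (0 : ℝ) (2 * π) → ℝ}

lemma pathExt_add : pathExt (x + y) = pathExt x + pathExt y := by
  funext u
  by_cases hu : u ∈ Set.Icc (0 : ℝ) (2 * π) <;> simp [pathExt, hu]

lemma pathExt_restrict_apply (g : ℝ → ℝ) {u : ℝ} (hu : u ∈ Set.Icc (0 : ℝ) (2 * π)) :
    pathExt (fun v => g v.1) u = g u := by
  simp [pathExt, hu]

lemma continuousOn_pathExt (hx : Continuous x) :
    ContinuousOn (pathExt x) (Set.Icc 0 (2 * π)) := by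
  have h2π : (0 : ℝ) ≤ 2 * π := by positivity
  refine (hx.comp (continuous_projIcc (h := h2π))).continuousOn.congr fun u hu => ?_
  simp [pathExt, Set.projIcc_of_mem h2π hu, hu]

lemma wienerPairing_add {h : ℝ → ℝ} (hh : Continuous (deriv (deriv h)))
    (hx : Continuous x) (hy : Continuous y) :
    wienerPairing h (x + y) = wienerPairing h x + wienerPairing h y := by
  have hint {z : Set.Icc (0 : ℝ) (2 * π) → ℝ} (hz : Continuous z) :
      IntervalIntegrable (fun u => pathExt z u * deriv (deriv h) u) volume 0 (2 * π) :=
    ((continuousOn_pathExt hz).mul hh.continuousOn).intervalIntegrable_of_Icc (by positivity)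
  simp only [wienerPairing, pathExt_add, Pi.add_apply, add_mul,
    intervalIntegral.integral_add (hint hx) (hint hy)]
  ring

end

lemma wienerPairing_restrict {h ξ : ℝ → ℝ} (hh : ContDiff ℝ 2 h) (hξ : ContDiff ℝ 1 ξ)
    (hξ0 : ξ 0 = 0) :
    wienerPairing h (fun u => ξ u.1) = ∫ u in (0 : ℝ)..(2 * π), deriv h u * deriv ξ u := by
  have hh' : ContDiff ℝ 1 (deriv h) := hh.iterate_deriv' 1 1
  have hparts := intervalIntegral.integral_mul_deriv_eq_deriv_mul (a := 0) (b := 2 * π)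
    (fun u _ => (hξ.differentiable one_ne_zero u).hasDerivAt)
    (fun u _ => (hh'.differentiable one_ne_zero u).hasDerivAt)
    ((hξ.continuous_deriv le_rfl).intervalIntegrable _ _)
    ((hh'.continuous_deriv le_rfl).intervalIntegrable _ _)
  have hrestrict : ∫ u in (0 : ℝ)..(2 * π), pathExt (fun v => ξ v.1) u * deriv (deriv h) u
      = ∫ u in (0 : ℝ)..(2 * π), ξ u * deriv (deriv h) u :=
    intervalIntegral.integral_congr fun u hu => by
      rw [Set.uIcc_of_le (by positivity)] at hu
      rw [pathExt_restrict_apply ξ hu]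
  have h2π : (2 * π) ∈ Set.Icc (0 : ℝ) (2 * π) := Set.right_mem_Icc.mpr (by positivity)
  rw [wienerPairing, hrestrict, hparts, pathExt_restrict_apply ξ h2π, hξ0]
  simp_rw [mul_comm (deriv ξ _)]
  ring

section

variable (t : ℝ) (α : ℝ → ℝ) (x : Set.Icc (0 : ℝ) (2 * π) → ℝ)

noncomputable def wienerExponent : ℝ :=
  -(1 / (4 * t)) * (∫ u in (0 : ℝ)..(2 * π), (deriv α u) ^ 2)
    - (1 / (2 * t)) * wienerPairing α x

lemma wienerV_eq (f : (Set.Icc (0 : ℝ) (2 * π) → ℝ) → ℂ) :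
    wienerV t α f x = Complex.exp (wienerExponent t α x) * f (x + fun u => α u.1) :=
  rfl

lemma wienerRho_eq (lam : ℝ → ℂ) (b : ℝ → ℝ) (f : (Set.Icc (0 : ℝ) (2 * π) → ℝ) → ℂ) :
    wienerRho t lam α b f x = Complex.exp (wienerExponent t α x) *
      Complex.exp (∫ u in (0 : ℝ)..(2 * π), lam u * (b u : ℂ) *
        Complex.exp ((pathExt x u : ℝ) : ℂ)) * f (x + fun u => α u.1) :=
  rfl

end

lemma wienerExponent_add_shift_comm (t : ℝ) {α ξ : ℝ → ℝ} (hα : ContDiff ℝ 2 α)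
    (hα0 : α 0 = 0) (hξ : ContDiff ℝ 2 ξ) (hξ0 : ξ 0 = 0)
    {x : Set.Icc (0 : ℝ) (2 * π) → ℝ} (hx : Continuous x) :
    wienerExponent t ξ x + wienerExponent t α (x + fun u => ξ u.1)
      = wienerExponent t α x + wienerExponent t ξ (x + fun u => α u.1) := by
  have hα'' : Continuous (deriv (deriv α)) := (hα.iterate_deriv' 1 1).continuous_deriv le_rfl
  have hξ'' : Continuous (deriv (deriv ξ)) := (hξ.iterate_deriv' 1 1).continuous_deriv le_rfl
  have hsymm : wienerPairing α (fun u => ξ u.1) = wienerPairing ξ (fun u => α u.1) := by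
    rw [wienerPairing_restrict hα (hξ.of_le one_le_two) hξ0,
      wienerPairing_restrict hξ (hα.of_le one_le_two) hα0]
    simp_rw [mul_comm (deriv α _)]
  simp only [wienerExponent]
  rw [wienerPairing_add (y := fun u => ξ u.1) hα'' hx (by fun_prop),
    wienerPairing_add (y := fun u => α u.1) hξ'' hx (by fun_prop), hsymm]
  ring

/-- Equivalence of the representations `ρ_λ` and `ρ_{e^ξ λ}`: the operator `V_ξ`
intertwines them, `V_ξ ∘ ρ_λ(α,b) = ρ_{e^ξ λ}(α,b) ∘ V_ξ`, pointwise on all functionals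
`f : C₀ → ℂ` (evaluated at points of `C₀`). -/
theorem wienerV_intertwines (t : ℝ)
    (ξ : ℝ → ℝ) (hξ : ContDiff ℝ 2 ξ) (hξ0 : ξ 0 = 0) (lam : ℝ → ℂ)
    (α : ℝ → ℝ) (hα : ContDiff ℝ 2 α) (hα0 : α 0 = 0)
    (b : ℝ → ℝ)
    (f : (Set.Icc (0 : ℝ) (2 * π) → ℝ) → ℂ)
    (x : Set.Icc (0 : ℝ) (2 * π) → ℝ) (hx : Continuous x) :
    wienerV t ξ (wienerRho t lam α b f) x
      = wienerRho t (fun u => (Real.exp (ξ u) : ℂ) * lam u) α b (wienerV t ξ f) x := by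
  set I := ∫ u in (0 : ℝ)..(2 * π), (Real.exp (ξ u) : ℂ) * lam u * (b u : ℂ) *
    Complex.exp ((pathExt x u : ℝ) : ℂ)
  have hlam : ∫ u in (0 : ℝ)..(2 * π), lam u * (b u : ℂ) *
      Complex.exp ((pathExt (x + fun v => ξ v.1) u : ℝ) : ℂ) = I := by
    refine intervalIntegral.integral_congr fun u hu => ?_
    rw [Set.uIcc_of_le (by positivity)] at hu
    simp only [pathExt_add, Pi.add_apply, pathExt_restrict_apply ξ hu, Complex.ofReal_add,
      Complex.exp_add, Complex.ofReal_exp]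
    ring
  have hexp : Complex.exp (wienerExponent t ξ x)
        * Complex.exp (wienerExponent t α (x + fun u => ξ u.1))
      = Complex.exp (wienerExponent t α x)
        * Complex.exp (wienerExponent t ξ (x + fun u => α u.1)) := by
    rw [← Complex.exp_add, ← Complex.exp_add]
    exact_mod_cast congrArg (fun s : ℝ => Complex.exp s)
      (wienerExponent_add_shift_comm t hα hα0 hξ hξ0 hx)
  simp only [wienerV_eq, wienerRho_eq, hlam]
  rw [add_right_comm x (fun u : Set.Icc (0 : ℝ) (2 * π) => ξ u.1)]
  linear_combination Complex.exp I * f (x + (fun u => α u.1) + fun u => ξ u.1) * hexp
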